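/- arXiv:0807.0658 — 3 statements merged into one kernel-verified Lean document; each statement's English description precedes it below -/
import Mathlib

section
/- Let U : D ⥤ C be a strong monoidal functor between monoidal categories and F ⊣ U an adjunction. Then the monad T = F ⋙ U on C is a bimonad (opmonoidal monad): the oplax monoidal structure on T obtained by composing the induced oplax structure on F with the inverse of the monoidal structure of U makes the multiplication μ : T ⋙ T ⟶ T and unit ι : 𝟭 ⟶ T into oplax monoidal (opmonoidal) natural transformations. -/
/-!
Everything reduces to two facts about the mate `δ_F` of the lax structure of `U`: precomposed
with the unit, `U δ_F` becomes `(η ⊗ η) ≫ μ_U`, and postcomposed with `ε ⊗ ε` at objects of the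
form `U a`, `U b`, `δ_F` becomes `F μ_U ≫ ε` (naturality of `ε` and `μ_U`, triangle identities).
Since `U` is strong, `μ_U` and `δ_U` are mutually inverse, which yields the unit axioms directly
and, together with naturality of `ε` and `δ_U`, the multiplication axioms.
-/

open CategoryTheory MonoidalCategory

variable {C D : Type*} [Category C] [Category D] [MonoidalCategory C] [MonoidalCategory D]

/-- The oplax tensorator on a left adjoint `F` of a lax monoidal functor `U`. -/
noncomputable def mateTensorator (F : C ⥤ D) (U : D ⥤ C) (adj : F ⊣ U) [U.LaxMonoidal]
    (x y : C) : F.obj (x ⊗ y) ⟶ F.obj x ⊗ F.obj y :=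
  F.map (adj.unit.app x ⊗ₘ adj.unit.app y) ≫
    F.map (Functor.LaxMonoidal.μ U (F.obj x) (F.obj y)) ≫
      adj.counit.app (F.obj x ⊗ F.obj y)

/-- The oplax counit on a left adjoint `F` of a lax monoidal functor `U`. -/
noncomputable def mateCounit (F : C ⥤ D) (U : D ⥤ C) (adj : F ⊣ U) [U.LaxMonoidal] :
    F.obj (𝟙_ C) ⟶ 𝟙_ D :=
  F.map (Functor.LaxMonoidal.ε U) ≫ adj.counit.app (𝟙_ D)

/-- The induced oplax tensorator of the monad `T = F ⋙ U` when `U` is strong monoidal: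
compose the oplax structure of `F` with the inverse of the monoidal structure of `U`. -/
noncomputable def monadTensorator (F : C ⥤ D) (U : D ⥤ C) (adj : F ⊣ U) [U.Monoidal]
    (x y : C) : U.obj (F.obj (x ⊗ y)) ⟶ U.obj (F.obj x) ⊗ U.obj (F.obj y) :=
  U.map (mateTensorator F U adj x y) ≫ Functor.OplaxMonoidal.δ U (F.obj x) (F.obj y)

/-- The induced oplax counit of the monad `T = F ⋙ U` when `U` is strong monoidal. -/
noncomputable def monadCounit (F : C ⥤ D) (U : D ⥤ C) (adj : F ⊣ U) [U.Monoidal] :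
    U.obj (F.obj (𝟙_ C)) ⟶ 𝟙_ C :=
  U.map (mateCounit F U adj) ≫ Functor.OplaxMonoidal.η U

open Functor.LaxMonoidal Functor.OplaxMonoidal

section LaxMonoidal

variable {F : C ⥤ D} {U : D ⥤ C} (adj : F ⊣ U) [U.LaxMonoidal]

lemma unit_comp_map_mateTensorator (x y : C) :
    adj.unit.app (x ⊗ y) ≫ U.map (mateTensorator F U adj x y) =
      (adj.unit.app x ⊗ₘ adj.unit.app y) ≫ μ U (F.obj x) (F.obj y) := by
  simp [mateTensorator]

lemma unit_comp_map_mateCounit :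
    adj.unit.app (𝟙_ C) ≫ U.map (mateCounit F U adj) = ε U := by
  simp [mateCounit]

lemma mateTensorator_comp_counit_tensorHom (a b : D) :
    mateTensorator F U adj (U.obj a) (U.obj b) ≫ (adj.counit.app a ⊗ₘ adj.counit.app b) =
      F.map (μ U a b) ≫ adj.counit.app (a ⊗ b) := by
  have triangles : (adj.unit.app (U.obj a) ⊗ₘ adj.unit.app (U.obj b)) ≫
      (U.map (adj.counit.app a) ⊗ₘ U.map (adj.counit.app b)) = 𝟙 _ := by
    simp
  simp only [mateTensorator, Category.assoc]
  rw [← adj.counit_naturality, ← F.map_comp_assoc, ← F.map_comp_assoc, Category.assoc, ← μ_natural,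
    reassoc_of% triangles]
  rfl

end LaxMonoidal

section Monoidal

variable {F : C ⥤ D} {U : D ⥤ C} (adj : F ⊣ U) [U.Monoidal]

lemma map_comp_δ_comp_mateTensorator_comp_counit_tensorHom {z : C} {a b : D}
    (f : F.obj z ⟶ a ⊗ b) :
    F.map (U.map f ≫ δ U a b) ≫ mateTensorator F U adj (U.obj a) (U.obj b) ≫
        (adj.counit.app a ⊗ₘ adj.counit.app b) = adj.counit.app (F.obj z) ≫ f := by
  rw [mateTensorator_comp_counit_tensorHom, F.map_comp, Category.assoc,
    ← F.map_comp_assoc (δ U a b), Functor.Monoidal.δ_μ, F.map_id, Category.id_comp]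
  exact adj.counit_naturality f

lemma map_comp_η_comp_mateCounit {z : C} (f : F.obj z ⟶ 𝟙_ D) :
    F.map (U.map f ≫ η U) ≫ mateCounit F U adj = adj.counit.app (F.obj z) ≫ f := by
  rw [mateCounit, F.map_comp, Category.assoc, ← F.map_comp_assoc (η U),
    Functor.Monoidal.η_ε, F.map_id, Category.id_comp]
  exact adj.counit_naturality f

lemma unit_comp_monadTensorator (x y : C) :
    adj.unit.app (x ⊗ y) ≫ monadTensorator F U adj x y = adj.unit.app x ⊗ₘ adj.unit.app y := by
  rw [monadTensorator, reassoc_of% unit_comp_map_mateTensorator, Functor.Monoidal.μ_δ,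
    Category.comp_id]

lemma unit_comp_monadCounit : adj.unit.app (𝟙_ C) ≫ monadCounit F U adj = 𝟙 (𝟙_ C) := by
  rw [monadCounit, reassoc_of% unit_comp_map_mateCounit, Functor.Monoidal.ε_η]

lemma map_counit_comp_monadTensorator (x y : C) :
    U.map (adj.counit.app (F.obj (x ⊗ y))) ≫ monadTensorator F U adj x y =
      U.map (F.map (monadTensorator F U adj x y)) ≫
        monadTensorator F U adj (U.obj (F.obj x)) (U.obj (F.obj y)) ≫
          (U.map (adj.counit.app (F.obj x)) ⊗ₘ U.map (adj.counit.app (F.obj y))) := by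
  rw [monadTensorator, monadTensorator, Category.assoc, δ_natural, ← U.map_comp_assoc,
    ← U.map_comp_assoc, ← U.map_comp_assoc, Category.assoc,
    map_comp_δ_comp_mateTensorator_comp_counit_tensorHom]
  rfl

lemma map_counit_comp_monadCounit :
    U.map (adj.counit.app (F.obj (𝟙_ C))) ≫ monadCounit F U adj =
      U.map (F.map (monadCounit F U adj)) ≫ monadCounit F U adj := by
  rw [monadCounit, ← U.map_comp_assoc, ← U.map_comp_assoc, map_comp_η_comp_mateCounit]

end Monoidal

/-- If `U : D ⥤ C` is strong monoidal with left adjoint `F`, then the monad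
`T = F ⋙ U` is a bimonad (opmonoidal monad): with respect to the induced oplax
structure `(σ², σ⁰)` on `T`, the multiplication `μ_x = U(ε_{F x})` and the unit
`ι = η` of the monad are opmonoidal natural transformations. -/
theorem bimonad_from_strong_monoidal_adjunction (F : C ⥤ D) (U : D ⥤ C)
    (adj : F ⊣ U) [U.Monoidal] :
    (∀ x y : C,
      U.map (adj.counit.app (F.obj (x ⊗ y))) ≫ monadTensorator F U adj x y =
        U.map (F.map (monadTensorator F U adj x y)) ≫
          monadTensorator F U adj (U.obj (F.obj x)) (U.obj (F.obj y)) ≫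
            (U.map (adj.counit.app (F.obj x)) ⊗ₘ U.map (adj.counit.app (F.obj y)))) ∧
    (U.map (adj.counit.app (F.obj (𝟙_ C))) ≫ monadCounit F U adj =
      U.map (F.map (monadCounit F U adj)) ≫ monadCounit F U adj) ∧
    (∀ x y : C,
      adj.unit.app (x ⊗ y) ≫ monadTensorator F U adj x y =
        (adj.unit.app x ⊗ₘ adj.unit.app y)) ∧
    (adj.unit.app (𝟙_ C) ≫ monadCounit F U adj = 𝟙 (𝟙_ C)) :=
  ⟨map_counit_comp_monadTensorator adj, map_counit_comp_monadCounit adj,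
    unit_comp_monadTensorator adj, unit_comp_monadCounit adj⟩
end

section
/- Let T be a bimonad (opmonoidal monad) on a monoidal category C. Then the Eilenberg–Moore category of T-modules carries a monoidal structure lifting that of C: the tensor product of modules (m, r) and (m', r') is (m ⊗ m', (r ⊗ r') ∘ σ²_{m,m'} : T(m ⊗ m') → m ⊗ m'), the unit is (𝟙, σ⁰ : T 𝟙 → 𝟙), the associators and unitors are those of C, and the forgetful functor U_T is strict (strong) monoidal with respect to this structure. -/
open CategoryTheory MonoidalCategory

/-!
Every structure map of the lifted monoidal structure is a module map because `σ²` and `σ⁰`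
intertwine `μ` and `η` (the bimonad axioms) and are natural, coassociative and counital.
Since the forgetful functor `T.Algebra ⥤ C` is faithful and carries the lifted structure maps
to those of `C` on the nose, the pentagon, triangle and naturality axioms are inherited from `C`.
-/

section

variable {C : Type*} [Category C] [MonoidalCategory C]

structure OpmonoidalMonadStructure (T : Monad C) where
  σ2 : ∀ x y : C, T.obj (x ⊗ y) ⟶ T.obj x ⊗ T.obj y
  σ0 : T.obj (𝟙_ C) ⟶ 𝟙_ C
  σ2_natural : ∀ {x y x' y' : C} (f : x ⟶ x') (g : y ⟶ y'),
      T.map (f ⊗ₘ g) ≫ σ2 x' y' = σ2 x y ≫ (T.map f ⊗ₘ T.map g)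
  σ2_assoc : ∀ x y z : C,
      σ2 (x ⊗ y) z ≫ (σ2 x y ⊗ₘ 𝟙 (T.obj z)) ≫ (α_ (T.obj x) (T.obj y) (T.obj z)).hom =
        T.map (α_ x y z).hom ≫ σ2 x (y ⊗ z) ≫ (𝟙 (T.obj x) ⊗ₘ σ2 y z)
  σ2_left_unit : ∀ x : C,
      σ2 (𝟙_ C) x ≫ (σ0 ⊗ₘ 𝟙 (T.obj x)) ≫ (λ_ (T.obj x)).hom = T.map (λ_ x).hom
  σ2_right_unit : ∀ x : C,
      σ2 x (𝟙_ C) ≫ (𝟙 (T.obj x) ⊗ₘ σ0) ≫ (ρ_ (T.obj x)).hom = T.map (ρ_ x).hom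
  μ_σ2 : ∀ x y : C, T.μ.app (x ⊗ y) ≫ σ2 x y =
      T.map (σ2 x y) ≫ σ2 (T.obj x) (T.obj y) ≫ (T.μ.app x ⊗ₘ T.μ.app y)
  μ_σ0 : T.μ.app (𝟙_ C) ≫ σ0 = T.map σ0 ≫ σ0
  η_σ2 : ∀ x y : C, T.η.app (x ⊗ y) ≫ σ2 x y = (T.η.app x ⊗ₘ T.η.app y)
  η_σ0 : T.η.app (𝟙_ C) ≫ σ0 = 𝟙 (𝟙_ C)

namespace OpmonoidalMonadStructure

variable {T : Monad C} (S : OpmonoidalMonadStructure T)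

def tensorObj (X Y : T.Algebra) : T.Algebra where
  A := X.A ⊗ Y.A
  a := S.σ2 X.A Y.A ≫ (X.a ⊗ₘ Y.a)
  unit := by
    rw [← Category.assoc, S.η_σ2, tensorHom_comp_tensorHom, X.unit, Y.unit]
    exact id_tensorHom_id X.A Y.A
  assoc := calc
    T.μ.app (X.A ⊗ Y.A) ≫ S.σ2 X.A Y.A ≫ (X.a ⊗ₘ Y.a)
      = T.map (S.σ2 X.A Y.A) ≫ S.σ2 _ _ ≫ (T.μ.app X.A ≫ X.a ⊗ₘ T.μ.app Y.A ≫ Y.a) := by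
        rw [← Category.assoc, S.μ_σ2, Category.assoc, Category.assoc, tensorHom_comp_tensorHom]
    _ = T.map (S.σ2 X.A Y.A) ≫ (S.σ2 _ _ ≫ (T.map X.a ⊗ₘ T.map Y.a)) ≫ (X.a ⊗ₘ Y.a) := by
        rw [X.assoc, Y.assoc, Category.assoc, tensorHom_comp_tensorHom]
    _ = T.map (S.σ2 X.A Y.A ≫ (X.a ⊗ₘ Y.a)) ≫ S.σ2 X.A Y.A ≫ (X.a ⊗ₘ Y.a) := by
        rw [← S.σ2_natural, Functor.map_comp, Category.assoc, Category.assoc]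

def tensorUnit : T.Algebra where
  A := 𝟙_ C
  a := S.σ0
  unit := S.η_σ0
  assoc := S.μ_σ0

def tensorHom {X Y X' Y' : T.Algebra} (f : X ⟶ X') (g : Y ⟶ Y') :
    S.tensorObj X Y ⟶ S.tensorObj X' Y' where
  f := f.f ⊗ₘ g.f
  h := by
    dsimp only [tensorObj]
    rw [← Category.assoc, S.σ2_natural, Category.assoc, tensorHom_comp_tensorHom, f.h, g.h,
      ← tensorHom_comp_tensorHom, Category.assoc]

def associator (X Y Z : T.Algebra) :
    S.tensorObj (S.tensorObj X Y) Z ≅ S.tensorObj X (S.tensorObj Y Z) :=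
  Monad.Algebra.isoMk (α_ X.A Y.A Z.A) <| calc
    T.map (α_ X.A Y.A Z.A).hom ≫ S.σ2 X.A (Y.A ⊗ Z.A) ≫ (X.a ⊗ₘ S.σ2 Y.A Z.A ≫ (Y.a ⊗ₘ Z.a))
      = (T.map (α_ X.A Y.A Z.A).hom ≫ S.σ2 X.A (Y.A ⊗ Z.A) ≫ (𝟙 _ ⊗ₘ S.σ2 Y.A Z.A)) ≫
          (X.a ⊗ₘ Y.a ⊗ₘ Z.a) := by
        simp only [Category.assoc, tensorHom_comp_tensorHom, Category.id_comp]
    _ = S.σ2 (X.A ⊗ Y.A) Z.A ≫ (S.σ2 X.A Y.A ⊗ₘ 𝟙 _) ≫ ((X.a ⊗ₘ Y.a) ⊗ₘ Z.a) ≫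
          (α_ X.A Y.A Z.A).hom := by
        rw [← S.σ2_assoc, associator_naturality]
        simp only [Category.assoc]
    _ = (S.σ2 (X.A ⊗ Y.A) Z.A ≫ ((S.σ2 X.A Y.A ≫ (X.a ⊗ₘ Y.a)) ⊗ₘ Z.a)) ≫
          (α_ X.A Y.A Z.A).hom := by
        simp only [Category.assoc, tensorHom_comp_tensorHom_assoc, Category.id_comp]

def leftUnitor (X : T.Algebra) : S.tensorObj S.tensorUnit X ≅ X :=
  Monad.Algebra.isoMk (λ_ X.A) <| calc
    T.map (λ_ X.A).hom ≫ X.a = S.σ2 (𝟙_ C) X.A ≫ (S.σ0 ⊗ₘ 𝟙 _) ≫ (𝟙 _ ⊗ₘ X.a) ≫ (λ_ X.A).hom := by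
        rw [← S.σ2_left_unit, id_tensorHom, leftUnitor_naturality]
        simp only [Category.assoc]
    _ = (S.σ2 (𝟙_ C) X.A ≫ (S.σ0 ⊗ₘ X.a)) ≫ (λ_ X.A).hom := by
        rw [← Category.assoc (S.σ0 ⊗ₘ 𝟙 _), tensorHom_comp_tensorHom, Category.id_comp,
          Category.comp_id, Category.assoc]

def rightUnitor (X : T.Algebra) : S.tensorObj X S.tensorUnit ≅ X :=
  Monad.Algebra.isoMk (ρ_ X.A) <| calc
    T.map (ρ_ X.A).hom ≫ X.a = S.σ2 X.A (𝟙_ C) ≫ (𝟙 _ ⊗ₘ S.σ0) ≫ (X.a ⊗ₘ 𝟙 _) ≫ (ρ_ X.A).hom := by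
        rw [← S.σ2_right_unit, tensorHom_id, rightUnitor_naturality]
        simp only [Category.assoc]
    _ = (S.σ2 X.A (𝟙_ C) ≫ (X.a ⊗ₘ S.σ0)) ≫ (ρ_ X.A).hom := by
        rw [← Category.assoc (𝟙 _ ⊗ₘ S.σ0), tensorHom_comp_tensorHom, Category.id_comp,
          Category.comp_id, Category.assoc]

abbrev monoidalCategoryStruct : MonoidalCategoryStruct T.Algebra where
  tensorObj := S.tensorObj
  tensorUnit := S.tensorUnit
  tensorHom := S.tensorHom
  whiskerLeft X _ _ f := S.tensorHom (𝟙 X) f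
  whiskerRight f Y := S.tensorHom f (𝟙 Y)
  associator := S.associator
  leftUnitor := S.leftUnitor
  rightUnitor := S.rightUnitor

def forgetInducingFunctorData :
    letI := S.monoidalCategoryStruct
    Monoidal.InducingFunctorData T.forget :=
  letI := S.monoidalCategoryStruct
  { μIso := fun _ _ => Iso.refl _
    whiskerLeft_eq := fun X _ _ f => by
      show 𝟙 X.A ⊗ₘ f.f = 𝟙 _ ≫ X.A ◁ f.f ≫ 𝟙 _
      simp
    whiskerRight_eq := fun f Y => by
      show f.f ⊗ₘ 𝟙 Y.A = 𝟙 _ ≫ f.f ▷ Y.A ≫ 𝟙 _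
      simp
    tensorHom_eq := fun f g => by
      show f.f ⊗ₘ g.f = 𝟙 _ ≫ (f.f ⊗ₘ g.f) ≫ 𝟙 _
      simp
    εIso := Iso.refl _
    associator_eq := fun X Y Z => by
      show (α_ X.A Y.A Z.A).hom =
        (𝟙 _ ≫ (𝟙 _ ⊗ₘ 𝟙 Z.A)) ≫ (α_ X.A Y.A Z.A).hom ≫ ((𝟙 X.A ⊗ₘ 𝟙 _) ≫ 𝟙 _)
      simp
    leftUnitor_eq := fun X => by
      show (λ_ X.A).hom = (𝟙 _ ≫ (𝟙 _ ⊗ₘ 𝟙 X.A)) ≫ (λ_ X.A).hom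
      simp
    rightUnitor_eq := fun X => by
      show (ρ_ X.A).hom = (𝟙 _ ≫ (𝟙 X.A ⊗ₘ 𝟙 _)) ≫ (ρ_ X.A).hom
      simp }

abbrev monoidalCategory : MonoidalCategory T.Algebra :=
  letI := S.monoidalCategoryStruct
  Monoidal.induced T.forget S.forgetInducingFunctorData

end OpmonoidalMonadStructure

end

/-- Moerdijk's theorem (existence part): if `T` is a bimonad (opmonoidal monad) on a
monoidal category `C` — a monad with an oplax monoidal structure `(σ², σ⁰)` for which
`μ` and `ι` are opmonoidal — then the Eilenberg–Moore category of `T`-modules carries a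
monoidal structure lifting that of `C`: the tensor product of `(m,r)` and `(m',r')` has
underlying object `m ⊗ m'` and action `(r ⊗ r') ∘ σ²`, the unit is `(𝟙, σ⁰)`, and the
associators and unitors are those of `C` (so the forgetful functor is strict monoidal). -/
theorem bimonad_lifts_monoidal_structure {C : Type*} [Category C] [MonoidalCategory C]
    (T : Monad C)
    (σ2 : ∀ x y : C, T.obj (x ⊗ y) ⟶ T.obj x ⊗ T.obj y)
    (σ0 : T.obj (𝟙_ C) ⟶ 𝟙_ C)
    (σ2_natural : ∀ {x y x' y' : C} (f : x ⟶ x') (g : y ⟶ y'),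
      T.map (f ⊗ₘ g) ≫ σ2 x' y' = σ2 x y ≫ (T.map f ⊗ₘ T.map g))
    (σ2_assoc : ∀ x y z : C,
      σ2 (x ⊗ y) z ≫ (σ2 x y ⊗ₘ 𝟙 (T.obj z)) ≫ (α_ (T.obj x) (T.obj y) (T.obj z)).hom =
        T.map (α_ x y z).hom ≫ σ2 x (y ⊗ z) ≫ (𝟙 (T.obj x) ⊗ₘ σ2 y z))
    (σ2_left_unit : ∀ x : C,
      σ2 (𝟙_ C) x ≫ (σ0 ⊗ₘ 𝟙 (T.obj x)) ≫ (λ_ (T.obj x)).hom = T.map (λ_ x).hom)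
    (σ2_right_unit : ∀ x : C,
      σ2 x (𝟙_ C) ≫ (𝟙 (T.obj x) ⊗ₘ σ0) ≫ (ρ_ (T.obj x)).hom = T.map (ρ_ x).hom)
    (BM1 : ∀ x y : C, T.μ.app (x ⊗ y) ≫ σ2 x y =
      T.map (σ2 x y) ≫ σ2 (T.obj x) (T.obj y) ≫ (T.μ.app x ⊗ₘ T.μ.app y))
    (BM2 : T.μ.app (𝟙_ C) ≫ σ0 = T.map σ0 ≫ σ0)
    (BM3 : ∀ x y : C, T.η.app (x ⊗ y) ≫ σ2 x y = (T.η.app x ⊗ₘ T.η.app y))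
    (BM4 : T.η.app (𝟙_ C) ≫ σ0 = 𝟙 (𝟙_ C)) :
    ∃ M : MonoidalCategory T.Algebra,
      (∀ X Y : T.Algebra,
        (@MonoidalCategoryStruct.tensorObj T.Algebra _ M.toMonoidalCategoryStruct X Y).A =
          X.A ⊗ Y.A) ∧
      (∀ X Y : T.Algebra,
        HEq (@MonoidalCategoryStruct.tensorObj T.Algebra _ M.toMonoidalCategoryStruct X Y).a
          (σ2 X.A Y.A ≫ (X.a ⊗ₘ Y.a))) ∧
      ((@MonoidalCategoryStruct.tensorUnit T.Algebra _ M.toMonoidalCategoryStruct).A = 𝟙_ C) ∧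
      (HEq (@MonoidalCategoryStruct.tensorUnit T.Algebra _ M.toMonoidalCategoryStruct).a σ0) ∧
      (∀ X Y Z : T.Algebra,
        HEq (@MonoidalCategoryStruct.associator T.Algebra _ M.toMonoidalCategoryStruct
          X Y Z).hom.f (α_ X.A Y.A Z.A).hom) ∧
      (∀ X : T.Algebra,
        HEq (@MonoidalCategoryStruct.leftUnitor T.Algebra _ M.toMonoidalCategoryStruct
          X).hom.f (λ_ X.A).hom) ∧
      (∀ X : T.Algebra,
        HEq (@MonoidalCategoryStruct.rightUnitor T.Algebra _ M.toMonoidalCategoryStruct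
          X).hom.f (ρ_ X.A).hom) := by
  let S : OpmonoidalMonadStructure T := ⟨σ2, σ0, σ2_natural, σ2_assoc, σ2_left_unit,
    σ2_right_unit, BM1, BM2, BM3, BM4⟩
  exact ⟨S.monoidalCategory, fun _ _ => rfl, fun _ _ => HEq.rfl, rfl, HEq.rfl,
    fun _ _ _ => HEq.rfl, fun _ => HEq.rfl, fun _ => HEq.rfl⟩
end

section
/- Let T be a bimonad on a monoidal category with left duals. Any natural transformation S : T ∘ ᵛ ∘ Tᵒᵖ ⟶ ᵛ satisfying the antipode axioms (HM1) (compatibility with evaluation) and (HM2) (compatibility with coevaluation) automatically satisfies the module conditions (HM0): S is compatible with the monad multiplication (S_x ∘ μ_{ᵛTx} = S_x ∘ T(S_{Tx} ∘ T(ᵛμ_x)) in the appropriate sense) and with the unit (S_x ∘ ι_{ᵛTx} ∘ ᵛι_x = id_{ᵛx}). -/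
open CategoryTheory MonoidalCategory Opposite

/-- A left duality on a monoidal category: a contravariant functor `ᵛ` together with
dinatural evaluation and coevaluation families satisfying the snake identities. -/
structure LeftDuality (C : Type*) [Category C] [MonoidalCategory C] where
  V : Cᵒᵖ ⥤ C
  ev : ∀ a : C, V.obj (op a) ⊗ a ⟶ 𝟙_ C
  coev : ∀ a : C, 𝟙_ C ⟶ a ⊗ V.obj (op a)
  ev_dinatural : ∀ {a b : C} (f : a ⟶ b),
    (V.map f.op ⊗ₘ 𝟙 a) ≫ ev a = (𝟙 (V.obj (op b)) ⊗ₘ f) ≫ ev b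
  coev_dinatural : ∀ {a b : C} (f : a ⟶ b),
    coev a ≫ (f ⊗ₘ 𝟙 (V.obj (op a))) = coev b ≫ (𝟙 b ⊗ₘ V.map f.op)
  snake₁ : ∀ a : C,
    (λ_ a).inv ≫ (coev a ⊗ₘ 𝟙 a) ≫ (α_ a (V.obj (op a)) a).hom ≫
      (𝟙 a ⊗ₘ ev a) ≫ (ρ_ a).hom = 𝟙 a
  snake₂ : ∀ a : C,
    (ρ_ (V.obj (op a))).inv ≫ (𝟙 (V.obj (op a)) ⊗ₘ coev a) ≫
      (α_ (V.obj (op a)) a (V.obj (op a))).inv ≫ (ev a ⊗ₘ 𝟙 (V.obj (op a))) ≫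
        (λ_ (V.obj (op a))).hom = 𝟙 (V.obj (op a))

variable {C : Type*} [Category C] [MonoidalCategory C]

/-!
Put `s x := S (T x) ∘ T(ᵛμₓ) : T(ᵛTx) ⟶ ᵛTx`. Naturality of `S` at `ηₓ` and the unit law
`μ ∘ Tη = id` give `S x = ᵛηₓ ∘ s x`, so (HM0) reduces to `s` being an action of the monad:
`s ∘ η = id` and `s ∘ μ = s ∘ T s`.

(HM1) and (HM2) say that the pairs `(s, μ)` and `(μ, s)` are compatible with `ev` and `coev`.
For any oplax monoidal `W`, such a compatible pair `(f, r)` and `(r, h)` forces `f = h`: this is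
"a left inverse equals a right inverse" in a convolution monoid whose unit law is the snake
identity. Precomposing (HM1) with the comonoidal transformations `η : 1 ⟶ T` and `μ : T² ⟶ T`
(this is where (BM1)-(BM4) enter), and applying (HM2) twice, gives such pairs for `W = 1` with
`f = s ∘ η`, `h = id`, and for `W = T²` with `f = s ∘ μ`, `h = s ∘ T s`.
-/

namespace CategoryTheory.Functor.OplaxMonoidal

variable {D : Type*} [Category D] [MonoidalCategory D]

abbrev ofTensorHom (F : C ⥤ D) (η : F.obj (𝟙_ C) ⟶ 𝟙_ D)
    (δ : ∀ X Y : C, F.obj (X ⊗ Y) ⟶ F.obj X ⊗ F.obj Y)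
    (δ_natural : ∀ {X Y X' Y' : C} (f : X ⟶ X') (g : Y ⟶ Y'),
      F.map (f ⊗ₘ g) ≫ δ X' Y' = δ X Y ≫ (F.map f ⊗ₘ F.map g))
    (associativity : ∀ X Y Z : C,
      δ (X ⊗ Y) Z ≫ (δ X Y ⊗ₘ 𝟙 (F.obj Z)) ≫ (α_ (F.obj X) (F.obj Y) (F.obj Z)).hom =
        F.map (α_ X Y Z).hom ≫ δ X (Y ⊗ Z) ≫ (𝟙 (F.obj X) ⊗ₘ δ Y Z))
    (left_unitality : ∀ X : C,
      δ (𝟙_ C) X ≫ (η ⊗ₘ 𝟙 (F.obj X)) ≫ (λ_ (F.obj X)).hom = F.map (λ_ X).hom)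
    (right_unitality : ∀ X : C,
      δ X (𝟙_ C) ≫ (𝟙 (F.obj X) ⊗ₘ η) ≫ (ρ_ (F.obj X)).hom = F.map (ρ_ X).hom) :
    F.OplaxMonoidal where
  η := η
  δ := δ
  δ_natural_left f X' := by simpa using (δ_natural f (𝟙 X')).symm
  δ_natural_right X' f := by simpa using (δ_natural (𝟙 X') f).symm
  oplax_associativity X Y Z := by simpa using associativity X Y Z
  oplax_left_unitality X := by
    rw [← cancel_mono (λ_ (F.obj X)).hom, Category.assoc, Category.assoc, ← tensorHom_id,
      left_unitality, ← F.map_comp, Iso.inv_hom_id, Iso.inv_hom_id, F.map_id]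
  oplax_right_unitality X := by
    rw [← cancel_mono (ρ_ (F.obj X)).hom, Category.assoc, Category.assoc, ← id_tensorHom,
      right_unitality, ← F.map_comp, Iso.inv_hom_id, Iso.inv_hom_id, F.map_id]

end CategoryTheory.Functor.OplaxMonoidal

open Functor.OplaxMonoidal

theorem eq_of_pairing_of_copairing {W : C ⥤ C} [W.OplaxMonoidal] {A M : C}
    (e : A ⊗ M ⟶ 𝟙_ C) (c : 𝟙_ C ⟶ M ⊗ A)
    (snake : (ρ_ A).inv ≫ A ◁ c ≫ (α_ A M A).inv ≫ e ▷ A ≫ (λ_ A).hom = 𝟙 A)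
    {f h : W.obj A ⟶ A} (r : W.obj M ⟶ M)
    (hfr : W.map e ≫ η W = δ W A M ≫ (f ⊗ₘ r) ≫ e)
    (hrh : W.map c ≫ δ W M A ≫ (r ⊗ₘ h) = η W ≫ c) : f = h := by
  -- `K` is the convolution `f ⋆ r ⋆ h`, bracketed either way.
  let K := W.map ((ρ_ A).inv ≫ A ◁ c ≫ (α_ A M A).inv) ≫ δ W (A ⊗ M) A ≫
    δ W A M ▷ W.obj A ≫ ((f ⊗ₘ r) ⊗ₘ h) ≫ e ▷ A ≫ (λ_ A).hom
  have hKf : K = f := by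
    have hc : W.map (A ◁ c) ≫ δ W A (M ⊗ A) ≫ W.obj A ◁ δ W M A ≫ (f ⊗ₘ (r ⊗ₘ h)) =
        δ W A (𝟙_ C) ≫ W.obj A ◁ η W ≫ (f ⊗ₘ c) := by
      rw [← δ_natural_right_assoc, ← id_tensorHom, ← id_tensorHom, ← id_tensorHom]
      simp only [tensorHom_comp_tensorHom, Category.id_comp, hrh]
    simp only [K, W.map_comp, Category.assoc, δ_comp_δ_whiskerRight_assoc,
      Iso.map_inv_hom_id_assoc, ← associator_inv_naturality_assoc, reassoc_of% hc,
      ← right_unitality_assoc]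
    rw [MonoidalCategory.tensorHom_def, Category.assoc, ← rightUnitor_inv_naturality_assoc,
      snake, Category.comp_id]
  have hKh : K = h := by
    have he : δ W A M ▷ W.obj A ≫ ((f ⊗ₘ r) ⊗ₘ h) ≫ e ▷ A =
        (W.map e ⊗ₘ W.map (𝟙 A)) ≫ (η W ⊗ₘ h) := by
      rw [tensorHom_comp_tensorHom, hfr, ← tensorHom_id, ← tensorHom_id,
        tensorHom_comp_tensorHom_assoc, tensorHom_comp_tensorHom, W.map_id, Category.id_comp,
        Category.comp_id, Category.assoc]
    dsimp only [K]
    rw [reassoc_of% he, δ_natural_assoc, δ_comp_η_tensorHom_assoc, leftUnitor_naturality,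
      tensorHom_id]
    simp only [← W.map_comp_assoc, Category.assoc, Iso.inv_hom_id_assoc, snake, W.map_id,
      Category.id_comp]
  exact hKf.symm.trans hKh

theorem pairing_precomp {W T : C ⥤ C} [W.OplaxMonoidal] [T.OplaxMonoidal] (φ : W ⟶ T)
    (hδ : ∀ X Y : C, φ.app (X ⊗ Y) ≫ δ T X Y = δ W X Y ≫ (φ.app X ⊗ₘ φ.app Y))
    (hη : φ.app (𝟙_ C) ≫ η T = η W) {A M : C} (e : A ⊗ M ⟶ 𝟙_ C)
    {a : T.obj A ⟶ A} {m : T.obj M ⟶ M} (hev : T.map e ≫ η T = δ T A M ≫ (a ⊗ₘ m) ≫ e) :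
    W.map e ≫ η W = δ W A M ≫ ((φ.app A ≫ a) ⊗ₘ (φ.app M ≫ m)) ≫ e := by
  rw [← hη, φ.naturality_assoc, hev, reassoc_of% hδ, tensorHom_comp_tensorHom_assoc]

theorem copairing_comp_self {T : C ⥤ C} [T.OplaxMonoidal] {A M : C} (c : 𝟙_ C ⟶ M ⊗ A)
    {m : T.obj M ⟶ M} {a : T.obj A ⟶ A} (hcoev : T.map c ≫ δ T M A ≫ (m ⊗ₘ a) = η T ≫ c) :
    (T ⋙ T).map c ≫ δ (T ⋙ T) M A ≫ ((T.map m ≫ m) ⊗ₘ (T.map a ≫ a)) = η (T ⋙ T) ≫ c := by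
  simp only [comp_δ, comp_η, Functor.comp_map, ← tensorHom_comp_tensorHom, Category.assoc,
    δ_natural_assoc, ← T.map_comp_assoc, hcoev]
  rw [T.map_comp_assoc, hcoev]

def dualAction {C : Type*} [Category C] {V : Cᵒᵖ ⥤ C} (T : Monad C)
    (S : ∀ x : C, T.obj (V.obj (op (T.obj x))) ⟶ V.obj (op x)) (x : C) :
    T.obj (V.obj (op (T.obj x))) ⟶ V.obj (op (T.obj x)) :=
  T.map (V.map (T.μ.app x).op) ≫ S (T.obj x)

theorem eq_dualAction_comp {C : Type*} [Category C] {V : Cᵒᵖ ⥤ C} {T : Monad C}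
    {S : ∀ x : C, T.obj (V.obj (op (T.obj x))) ⟶ V.obj (op x)}
    (S_natural : ∀ {x y : C} (f : x ⟶ y), T.map (V.map (T.map f).op) ≫ S x = S y ≫ V.map f.op)
    (x : C) : S x = dualAction T S x ≫ V.map (T.η.app x).op := by
  rw [dualAction, Category.assoc, ← S_natural, ← T.map_comp_assoc, ← V.map_comp, ← op_comp,
    T.right_unit]
  simp only [Functor.id_obj, op_id, V.map_id, T.map_id, Category.id_comp]

/-- For a bimonad `T` on a monoidal category with left duals, any natural
transformation `S : T ∘ ᵛ ∘ Tᵒᵖ ⟶ ᵛ` satisfying the antipode axioms (HM1)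
(compatibility with evaluation) and (HM2) (compatibility with coevaluation)
automatically satisfies the module conditions (HM0): compatibility with the
multiplication and with the unit of the monad. -/
theorem HM1_HM2_implies_HM0 (T : Monad C) (D : LeftDuality C)
    (σ2 : ∀ x y : C, T.obj (x ⊗ y) ⟶ T.obj x ⊗ T.obj y)
    (σ0 : T.obj (𝟙_ C) ⟶ 𝟙_ C)
    (σ2_natural : ∀ {x y x' y' : C} (f : x ⟶ x') (g : y ⟶ y'),
      T.map (f ⊗ₘ g) ≫ σ2 x' y' = σ2 x y ≫ (T.map f ⊗ₘ T.map g))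
    (σ2_assoc : ∀ x y z : C,
      σ2 (x ⊗ y) z ≫ (σ2 x y ⊗ₘ 𝟙 (T.obj z)) ≫ (α_ (T.obj x) (T.obj y) (T.obj z)).hom =
        T.map (α_ x y z).hom ≫ σ2 x (y ⊗ z) ≫ (𝟙 (T.obj x) ⊗ₘ σ2 y z))
    (σ2_left_unit : ∀ x : C,
      σ2 (𝟙_ C) x ≫ (σ0 ⊗ₘ 𝟙 (T.obj x)) ≫ (λ_ (T.obj x)).hom = T.map (λ_ x).hom)
    (σ2_right_unit : ∀ x : C,
      σ2 x (𝟙_ C) ≫ (𝟙 (T.obj x) ⊗ₘ σ0) ≫ (ρ_ (T.obj x)).hom = T.map (ρ_ x).hom)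
    (BM1 : ∀ x y : C, T.μ.app (x ⊗ y) ≫ σ2 x y =
      T.map (σ2 x y) ≫ σ2 (T.obj x) (T.obj y) ≫ (T.μ.app x ⊗ₘ T.μ.app y))
    (BM2 : T.μ.app (𝟙_ C) ≫ σ0 = T.map σ0 ≫ σ0)
    (BM3 : ∀ x y : C, T.η.app (x ⊗ y) ≫ σ2 x y = (T.η.app x ⊗ₘ T.η.app y))
    (BM4 : T.η.app (𝟙_ C) ≫ σ0 = 𝟙 (𝟙_ C))
    (S : ∀ x : C, T.obj (D.V.obj (op (T.obj x))) ⟶ D.V.obj (op x))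
    (S_natural : ∀ {x y : C} (f : x ⟶ y),
      T.map (D.V.map (T.map f).op) ≫ S x = S y ≫ D.V.map f.op)
    (HM1 : ∀ x : C,
      T.map (D.ev (T.obj x)) ≫ σ0 =
        σ2 (D.V.obj (op (T.obj x))) (T.obj x) ≫
          ((T.map (D.V.map (T.μ.app x).op) ≫ S (T.obj x)) ⊗ₘ T.μ.app x) ≫
            D.ev (T.obj x))
    (HM2 : ∀ x : C,
      T.map (D.coev (T.obj x)) ≫ σ2 (T.obj x) (D.V.obj (op (T.obj x))) ≫
          (T.μ.app x ⊗ₘ (T.map (D.V.map (T.μ.app x).op) ≫ S (T.obj x))) =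
        σ0 ≫ D.coev (T.obj x)) :
    (∀ x : C, T.μ.app (D.V.obj (op (T.obj x))) ≫ S x =
      T.map (T.map (D.V.map (T.μ.app x).op)) ≫ T.map (S (T.obj x)) ≫ S x) ∧
    (∀ x : C, T.η.app (D.V.obj (op (T.obj x))) ≫ S x = D.V.map (T.η.app x).op) := by
  let : T.toFunctor.OplaxMonoidal :=
    .ofTensorHom T.toFunctor σ0 σ2 σ2_natural σ2_assoc σ2_left_unit σ2_right_unit
  have snake (x : C) : (ρ_ _).inv ≫ _ ◁ D.coev (T.obj x) ≫ (α_ _ _ _).inv ≫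
      D.ev (T.obj x) ▷ _ ≫ (λ_ _).hom = 𝟙 _ := by
    simpa using D.snake₂ (T.obj x)
  have unit (x : C) : T.η.app _ ≫ dualAction T S x = 𝟙 _ :=
    eq_of_pairing_of_copairing (W := 𝟭 C) _ _ (snake x) _
      (pairing_precomp T.η (fun X Y => (BM3 X Y).trans (Category.id_comp _).symm) BM4 _ (HM1 x))
      (by simp)
  have mul (x : C) :
      T.μ.app _ ≫ dualAction T S x = T.map (dualAction T S x) ≫ dualAction T S x :=
    eq_of_pairing_of_copairing (W := T.toFunctor ⋙ T.toFunctor) _ _ (snake x) _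
      (pairing_precomp T.μ (fun X Y => (BM1 X Y).trans (Category.assoc _ _ _).symm) BM2 _
        (HM1 x))
      (by rw [← T.assoc]; exact copairing_comp_self _ (HM2 x))
  refine ⟨fun x => ?_, fun x => ?_⟩
  · rw [eq_dualAction_comp S_natural x, reassoc_of% mul, ← eq_dualAction_comp S_natural,
      dualAction, T.map_comp, Category.assoc]
  · rw [eq_dualAction_comp S_natural x, reassoc_of% unit]
end
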